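/- For positive reals r, s, d, the function σ ↦ σ·Π₀(r,σ,d) is strictly monotone increasing on (0,∞), where Π₀(r,σ,d) = (∑_{l=0}^∞ r^l / ∏_{m=1}^{l} (σ + m·d))^{-1}. -/

import Mathlib

/-!
Dividing by `σ`, one gets `σ · Π₀(r,σ,d) = σ / S(σ)` with `S(σ) = ∑ₗ rˡ / ∏_{m=1}^{l} (σ + m·d)`.
Every term of `S` is nonincreasing in `σ` and the `l = 0` term is `1`, so `S` is positive and
nonincreasing; hence `σ / S(σ)` is strictly increasing. The series converges by comparison with
`∑ (r/d)ˡ / l!`.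
-/

open scoped BigOperators

/-- Term of the normalizing series of the birth-death queue:
`r^l / ∏_{m=1}^{l} (s + m·d)`, empty product = 1. -/
noncomputable def qterm (r s d : ℝ) (l : ℕ) : ℝ :=
  r ^ l / ∏ m ∈ Finset.Icc 1 l, (s + (m : ℝ) * d)

/-- Stationary empty-queue probability `Π₀(r,s,d)`. -/
noncomputable def Pi0 (r s d : ℝ) : ℝ := (∑' l : ℕ, qterm r s d l)⁻¹

open Finset

lemma prod_add_nat_mul_pos {s d : ℝ} (hs : 0 < s) (hd : 0 ≤ d) (l : ℕ) :
    0 < ∏ m ∈ Icc 1 l, (s + (m : ℝ) * d) :=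
  prod_pos fun _ _ => by positivity

lemma pow_mul_factorial_le_prod_add_nat_mul {s d : ℝ} (hs : 0 ≤ s) (hd : 0 ≤ d) (l : ℕ) :
    d ^ l * (l.factorial : ℝ) ≤ ∏ m ∈ Icc 1 l, (s + (m : ℝ) * d) := by
  have hfac : ∏ m ∈ Icc 1 l, ((m : ℝ) * d) = d ^ l * (l.factorial : ℝ) := by
    rw [prod_mul_distrib, prod_const, Nat.card_Icc, ← Nat.cast_prod,
      ← Ico_add_one_right_eq_Icc, prod_Ico_id_eq_factorial, add_tsub_cancel_right, mul_comm]
  rw [← hfac]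
  exact prod_le_prod (fun _ _ => by positivity) fun _ _ => le_add_of_nonneg_left hs

lemma qterm_zero (r s d : ℝ) : qterm r s d 0 = 1 := by
  simp [qterm]

lemma qterm_nonneg {r s d : ℝ} (hr : 0 ≤ r) (hs : 0 < s) (hd : 0 ≤ d) (l : ℕ) :
    0 ≤ qterm r s d l :=
  div_nonneg (pow_nonneg hr l) (prod_add_nat_mul_pos hs hd l).le

lemma qterm_antitoneOn {r d : ℝ} (hr : 0 ≤ r) (hd : 0 ≤ d) (l : ℕ) :
    AntitoneOn (fun s => qterm r s d l) (Set.Ioi 0) := fun a ha _ _ hab =>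
  div_le_div_of_nonneg_left (pow_nonneg hr l) (prod_add_nat_mul_pos ha hd l)
    (prod_le_prod (fun _ _ => add_nonneg (le_of_lt ha) (by positivity))
      fun _ _ => by linarith)

lemma summable_qterm {r s d : ℝ} (hr : 0 ≤ r) (hs : 0 < s) (hd : 0 < d) :
    Summable (qterm r s d) := by
  refine .of_nonneg_of_le (qterm_nonneg hr hs hd.le) (fun l => ?_)
    (Real.summable_pow_div_factorial (r / d))
  calc qterm r s d l ≤ r ^ l / (d ^ l * (l.factorial : ℝ)) :=
        div_le_div_of_nonneg_left (pow_nonneg hr l) (by positivity)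
          (pow_mul_factorial_le_prod_add_nat_mul hs.le hd.le l)
    _ = (r / d) ^ l / (l.factorial : ℝ) := by rw [div_pow, div_div]

lemma tsum_qterm_pos {r s d : ℝ} (hr : 0 ≤ r) (hs : 0 < s) (hd : 0 < d) :
    0 < ∑' l, qterm r s d l :=
  (summable_qterm hr hs hd).tsum_pos (qterm_nonneg hr hs hd.le) 0 (by rw [qterm_zero]; exact one_pos)

lemma tsum_qterm_antitoneOn {r d : ℝ} (hr : 0 ≤ r) (hd : 0 < d) :
    AntitoneOn (fun s => ∑' l, qterm r s d l) (Set.Ioi 0) := fun _ ha _ hb hab =>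
  (summable_qterm hr hb hd).tsum_le_tsum (fun l => qterm_antitoneOn hr hd.le l ha hb hab)
    (summable_qterm hr ha hd)

theorem stmt7 (r d : ℝ) (hr : 0 < r) (hd : 0 < d) :
    StrictMonoOn (fun σ : ℝ => σ * Pi0 r σ d) (Set.Ioi 0) := by
  intro a ha b hb hab
  have hSa := tsum_qterm_pos hr.le ha hd
  have hSb := tsum_qterm_pos hr.le hb hd
  simp only [Pi0, ← div_eq_mul_inv]
  calc a / ∑' l, qterm r a d l < b / ∑' l, qterm r a d l := div_lt_div_of_pos_right hab hSa
    _ ≤ b / ∑' l, qterm r b d l :=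
      div_le_div_of_nonneg_left (le_of_lt hb) hSb (tsum_qterm_antitoneOn hr.le hd ha hb hab.le)
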